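/- arXiv:1806.02236 — 2 statements merged into one kernel-verified Lean document; each statement's English description precedes it below -/
import Mathlib

section
/- If a, b, c ∈ ℤ² are not collinear and the triangle conv{a,b,c} contains no lattice point other than a, b and c, then |det(b−a, c−a)| = 1, i.e., the triangle has Euclidean area 1/2 (normalized area 1). Consequently, every fine triangulation of a lattice polygon is unimodular. -/
open Set MeasureTheory

noncomputable section

/-- Points of `ℝ²` with integer coordinates. -/
def latticePts2 : Set (Fin 2 → ℝ) := {x | ∀ i, ∃ n : ℤ, x i = (n : ℝ)}

/-- Cast a point of `ℤ²` into `ℝ²`. -/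
def c2 (a : Fin 2 → ℤ) : Fin 2 → ℝ := fun i => (a i : ℝ)

/-- A lattice polygon: a `2`-dimensional convex hull of finitely many points of `ℤ²`. -/
def IsLatticePolygon (P : Set (Fin 2 → ℝ)) : Prop :=
  (∃ F : Set (Fin 2 → ℝ), F.Finite ∧ F ⊆ latticePts2 ∧ P = convexHull ℝ F) ∧
  (interior P).Nonempty

/-- `T` is a triangulation of the lattice polygon `P`. -/
def IsTriangulationOf2 (P : Set (Fin 2 → ℝ)) (T : Set (Finset (Fin 2 → ℝ))) : Prop :=
  T.Finite ∧
  (∀ S ∈ T, (S : Set (Fin 2 → ℝ)) ⊆ P ∩ latticePts2 ∧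
    AffineIndependent ℝ (fun v : (S : Set (Fin 2 → ℝ)) => (v : Fin 2 → ℝ))) ∧
  (⋃ S ∈ T, convexHull ℝ (S : Set (Fin 2 → ℝ))) = P ∧
  (∀ S ∈ T, ∀ S' : Finset (Fin 2 → ℝ), S' ⊆ S → S' ∈ T) ∧
  (∀ S ∈ T, ∀ S' ∈ T, ∃ F : Finset (Fin 2 → ℝ), F ∈ T ∧ F ⊆ S ∧ F ⊆ S' ∧
    convexHull ℝ (S : Set (Fin 2 → ℝ)) ∩ convexHull ℝ (S' : Set (Fin 2 → ℝ)) =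
      convexHull ℝ (F : Set (Fin 2 → ℝ)))

/-- `T` is fine: every lattice point of `P` is a vertex of some triangle of `T`. -/
def IsFine2 (P : Set (Fin 2 → ℝ)) (T : Set (Finset (Fin 2 → ℝ))) : Prop :=
  ∀ x ∈ P ∩ latticePts2, ∃ S ∈ T, x ∈ S

/-- `T` is unimodular: every triangle of `T` has Euclidean area `1/2`. -/
def IsUnimodular2 (T : Set (Finset (Fin 2 → ℝ))) : Prop :=
  ∀ S ∈ T, S.card = 3 →
    volume (convexHull ℝ (S : Set (Fin 2 → ℝ))) = ENNReal.ofReal (1 / 2)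

/-!
Write `u = b - a`, `v = c - a` and `d = det (u, v) ≠ 0`. By Cramer's rule every `w ∈ ℤ²` is
`s • u + t • v` with real `s, t`; subtracting `⌊s⌋ • u + ⌊t⌋ • v` gives a lattice point
`fract s • u + fract t • v` of the half-open parallelogram on `u, v`. This parallelogram is the
triangle `conv {0, u, v}` together with its reflection in the midpoint of `[u, v]`, so emptiness of
the triangle forces `fract s = fract t = 0`. Hence `u, v` is a `ℤ`-basis of `ℤ²`, and writing the
standard basis in it gives `d ∣ 1`. The triangle is the image of the unit triangle under an affine
map of determinant `d`, so its area is `|d| / 2`.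

In a fine triangulation, a lattice point `p` of a triangle `S` is a vertex of some `S'`, and
`conv S ∩ conv S'` is the hull of a common face; since the vertices of `S'` are affinely
independent, `p` is a vertex of that face, hence of `S`. So every triangle is empty.
-/

def det2 {R : Type*} [CommRing R] (u v : Fin 2 → R) : R := u 0 * v 1 - u 1 * v 0

section Det2

variable {R K : Type*} [CommRing R] [Field K]

lemma det2_smul_add_smul (u v : Fin 2 → R) (a b c d : R) :
    det2 (a • u + b • v) (c • u + d • v) = (a * d - b * c) * det2 u v := by
  simp only [det2, Pi.add_apply, Pi.smul_apply, smul_eq_mul]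
  ring

lemma det2_single_single : det2 (Pi.single 0 1 : Fin 2 → R) (Pi.single 1 1) = 1 := by
  simp [det2]

lemma eq_div_det2_smul_add_div_det2_smul {u v : Fin 2 → K} (h : det2 u v ≠ 0) (w : Fin 2 → K) :
    w = (det2 w v / det2 u v) • u + (det2 u w / det2 u v) • v := by
  rw [funext_iff, Fin.forall_fin_two]
  simp only [Pi.add_apply, Pi.smul_apply, smul_eq_mul]
  constructor <;> rw [div_mul_eq_mul_div, div_mul_eq_mul_div, ← add_div, eq_div_iff h] <;>
    simp only [det2] <;> ring

lemma eq_and_eq_of_smul_add_smul_eq {u v : Fin 2 → K} (h : det2 u v ≠ 0) {a b c d : K}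
    (e : a • u + b • v = c • u + d • v) : a = c ∧ b = d := by
  have h0 := congrFun e 0
  have h1 := congrFun e 1
  simp only [Pi.add_apply, Pi.smul_apply, smul_eq_mul] at h0 h1
  constructor <;> refine mul_right_cancel₀ h ?_ <;> simp only [det2]
  · linear_combination v 1 * h0 - v 0 * h1
  · linear_combination u 0 * h1 - u 1 * h0
end Det2

lemma latticePts2_eq_range_c2 : latticePts2 = range c2 := by
  ext x
  refine ⟨fun hx => ⟨fun i => (hx i).choose, funext fun i => ((hx i).choose_spec).symm⟩, ?_⟩
  rintro ⟨a, rfl⟩ i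
  exact ⟨a i, rfl⟩

lemma c2_injective : Function.Injective c2 := fun _ _ h =>
  funext fun i => Int.cast_injective (congrFun h i)

lemma c2_zsmul (m : ℤ) (u : Fin 2 → ℤ) : c2 (m • u) = (m : ℝ) • c2 u := by
  funext i
  simp [c2]

lemma c2_add (u v : Fin 2 → ℤ) : c2 (u + v) = c2 u + c2 v := by
  funext i
  simp [c2]

lemma c2_sub (u v : Fin 2 → ℤ) : c2 (u - v) = c2 u - c2 v := by
  funext i
  simp [c2]

lemma det2_c2 (u v : Fin 2 → ℤ) : det2 (c2 u) (c2 v) = det2 u v := by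
  simp [det2, c2]

lemma add_smul_add_smul_mem_convexHull {E : Type*} [AddCommGroup E] [Module ℝ E] (A U V : E)
    {α β : ℝ} (hα : 0 ≤ α) (hβ : 0 ≤ β) (hαβ : α + β ≤ 1) :
    A + α • U + β • V ∈ convexHull ℝ {A, A + U, A + V} := by
  have := (convex_convexHull ℝ ({A, A + U, A + V} : Set E)).sum_mem (t := Finset.univ)
    (w := ![1 - α - β, α, β]) (z := ![A, A + U, A + V])
    (fun i _ => by fin_cases i <;> simp <;> linarith)
    (by simp [Fin.sum_univ_three]; ring)
    (fun i _ => subset_convexHull ℝ _ (by fin_cases i <;> simp))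
  convert this using 1
  simp only [Fin.sum_univ_three, Matrix.cons_val_zero, Matrix.cons_val_one, Matrix.cons_val_two,
    Matrix.head_cons, Matrix.tail_cons]
  module

section EmptyTriangle

variable {a u v : Fin 2 → ℤ}

lemma coeffs_eq_vertex_of_empty_triangle (hd : det2 u v ≠ 0)
    (hempty : convexHull ℝ {c2 a, c2 a + c2 u, c2 a + c2 v} ∩ latticePts2 ⊆
      {c2 a, c2 a + c2 u, c2 a + c2 v})
    {α β : ℝ} (hα : 0 ≤ α) (hβ : 0 ≤ β) (hαβ : α + β ≤ 1)
    (hlat : α • c2 u + β • c2 v ∈ range c2) :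
    (α = 0 ∧ β = 0) ∨ (α = 1 ∧ β = 0) ∨ (α = 0 ∧ β = 1) := by
  have hdR : det2 (c2 u) (c2 v) ≠ 0 := by rwa [det2_c2, Int.cast_ne_zero]
  obtain ⟨z, hz⟩ := hlat
  have hmem : c2 a + α • c2 u + β • c2 v ∈ ({c2 a, c2 a + c2 u, c2 a + c2 v} : Set _) := by
    refine hempty ⟨add_smul_add_smul_mem_convexHull _ _ _ hα hβ hαβ, ?_⟩
    rw [latticePts2_eq_range_c2]
    exact ⟨a + z, by rw [c2_add, hz, add_assoc]⟩
  simp only [mem_insert_iff, mem_singleton_iff, add_assoc, add_eq_left, add_right_inj] at hmem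
  rcases hmem with h | h | h
  · exact Or.inl (eq_and_eq_of_smul_add_smul_eq hdR (h.trans (by simp)))
  · exact Or.inr (Or.inl (eq_and_eq_of_smul_add_smul_eq hdR (h.trans (by simp))))
  · exact Or.inr (Or.inr (eq_and_eq_of_smul_add_smul_eq hdR (h.trans (by simp))))

theorem exists_zsmul_add_zsmul_eq_of_empty_triangle (hd : det2 u v ≠ 0)
    (hempty : convexHull ℝ {c2 a, c2 a + c2 u, c2 a + c2 v} ∩ latticePts2 ⊆
      {c2 a, c2 a + c2 u, c2 a + c2 v})
    (w : Fin 2 → ℤ) : ∃ m n : ℤ, m • u + n • v = w := by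
  have hdR : det2 (c2 u) (c2 v) ≠ 0 := by rwa [det2_c2, Int.cast_ne_zero]
  set s := det2 (c2 w) (c2 v) / det2 (c2 u) (c2 v)
  set t := det2 (c2 u) (c2 w) / det2 (c2 u) (c2 v)
  have hw : c2 w = s • c2 u + t • c2 v := eq_div_det2_smul_add_div_det2_smul hdR (c2 w)
  have hfract : Int.fract s • c2 u + Int.fract t • c2 v = c2 (w - ⌊s⌋ • u - ⌊t⌋ • v) := by
    rw [c2_sub, c2_sub, c2_zsmul, c2_zsmul, hw, Int.fract, Int.fract]
    module
  have hs0 := Int.fract_nonneg s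
  have ht0 := Int.fract_nonneg t
  have hs1 := Int.fract_lt_one s
  have ht1 := Int.fract_lt_one t
  have hzero : Int.fract s = 0 ∧ Int.fract t = 0 := by
    rcases le_or_gt (Int.fract s + Int.fract t) 1 with hle | hgt
    · rcases coeffs_eq_vertex_of_empty_triangle hd hempty hs0 ht0 hle ⟨_, hfract.symm⟩ with
        h | h | h
      · exact h
      · linarith [h.1]
      · linarith [h.2]
    · have hrefl : (1 - Int.fract s) • c2 u + (1 - Int.fract t) • c2 v ∈ range c2 :=
        ⟨u + v - (w - ⌊s⌋ • u - ⌊t⌋ • v), by rw [c2_sub, c2_add, ← hfract]; module⟩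
      rcases coeffs_eq_vertex_of_empty_triangle hd hempty (by linarith) (by linarith)
        (by linarith) hrefl with h | h | h <;> linarith [h.1, h.2]
  refine ⟨⌊s⌋, ⌊t⌋, c2_injective ?_⟩
  rw [c2_add, c2_zsmul, c2_zsmul, hw]
  rw [Int.fract, sub_eq_zero, Int.fract, sub_eq_zero] at hzero
  rw [← hzero.1, ← hzero.2]

end EmptyTriangle

lemma natAbs_det2_eq_one_of_forall_exists_zsmul_add_zsmul_eq {u v : Fin 2 → ℤ}
    (h : ∀ w, ∃ m n : ℤ, m • u + n • v = w) : (det2 u v).natAbs = 1 := by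
  obtain ⟨m₀, n₀, h₀⟩ := h (Pi.single 0 1)
  obtain ⟨m₁, n₁, h₁⟩ := h (Pi.single 1 1)
  have hone : (m₀ * n₁ - n₀ * m₁) * det2 u v = 1 := by
    rw [← det2_smul_add_smul, h₀, h₁, det2_single_single]
  exact Int.isUnit_iff_natAbs_eq.mp (IsUnit.of_mul_eq_one_right _ hone)

lemma collinear_of_det2_sub_eq_zero {A B C : Fin 2 → ℝ} (h : det2 (B - A) (C - A) = 0) :
    Collinear ℝ {A, B, C} := by
  by_cases hBA : B = A
  · simp [hBA, collinear_pair]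
  set u := B - A
  set v := C - A
  have hu : u 0 ^ 2 + u 1 ^ 2 ≠ 0 := by
    intro h0
    obtain ⟨h0, h1⟩ := (add_eq_zero_iff_of_nonneg (sq_nonneg _) (sq_nonneg _)).mp h0
    refine hBA (sub_eq_zero.mp (funext (Fin.forall_fin_two.mpr ⟨?_, ?_⟩)))
    · exact pow_eq_zero_iff two_ne_zero |>.mp h0
    · exact pow_eq_zero_iff two_ne_zero |>.mp h1
  -- `v` is parallel to `u`, so it is its own orthogonal projection onto `u`.
  have hv : v = ((u 0 * v 0 + u 1 * v 1) / (u 0 ^ 2 + u 1 ^ 2)) • u := by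
    simp only [det2] at h
    funext i
    fin_cases i <;> simp <;> field_simp
    · linear_combination -(u 1 * h)
    · linear_combination u 0 * h
  rw [collinear_iff_of_mem (mem_insert A _)]
  refine ⟨u, ?_⟩
  rintro p (rfl | rfl | rfl)
  · exact ⟨0, by simp⟩
  · exact ⟨1, by simp [u]⟩
  · exact ⟨_, eq_add_of_sub_eq hv⟩

theorem natAbs_det2_sub_eq_one_of_empty_triangle {a b c : Fin 2 → ℤ}
    (hcol : ¬Collinear ℝ {c2 a, c2 b, c2 c})
    (hempty : convexHull ℝ {c2 a, c2 b, c2 c} ∩ latticePts2 ⊆ {c2 a, c2 b, c2 c}) :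
    (det2 (b - a) (c - a)).natAbs = 1 := by
  have hd : det2 (b - a) (c - a) ≠ 0 := fun h => hcol <| collinear_of_det2_sub_eq_zero <| by
    rw [← c2_sub, ← c2_sub, det2_c2, h, Int.cast_zero]
  have hvert : ({c2 a, c2 a + c2 (b - a), c2 a + c2 (c - a)} : Set (Fin 2 → ℝ)) =
      {c2 a, c2 b, c2 c} := by
    simp only [c2_sub, add_sub_cancel]
  rw [← hvert] at hempty
  exact natAbs_det2_eq_one_of_forall_exists_zsmul_add_zsmul_eq
    (exists_zsmul_add_zsmul_eq_of_empty_triangle hd hempty)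

def unitTriangle : Set (Fin 2 → ℝ) := {x | 0 ≤ x 0 ∧ 0 ≤ x 1 ∧ x 0 + x 1 ≤ 1}

lemma volume_unitTriangle_slice (x : ℝ) :
    volume {y : ℝ | 0 ≤ x ∧ 0 ≤ y ∧ x + y ≤ 1} =
      (Icc 0 1).indicator (fun x => ENNReal.ofReal (1 - x)) x := by
  by_cases hx : x ∈ Icc (0 : ℝ) 1
  · rw [indicator_of_mem hx, ← sub_zero (1 - x), ← Real.volume_Icc]
    congr 1
    ext y
    simp only [mem_ofPred_eq, mem_Icc, hx.1, true_and]
    constructor <;> rintro ⟨h1, h2⟩ <;> exact ⟨h1, by linarith⟩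
  · rw [indicator_of_notMem hx, measure_eq_zero_iff_ae_notMem]
    refine Filter.Eventually.of_forall fun y ⟨h0, hy, hxy⟩ => hx ⟨h0, by linarith⟩

lemma volume_unitTriangle : volume unitTriangle = ENNReal.ofReal (1 / 2) := by
  have hT : unitTriangle = MeasurableEquiv.piFinTwo (fun _ => ℝ) ⁻¹'
      {p : ℝ × ℝ | 0 ≤ p.1 ∧ 0 ≤ p.2 ∧ p.1 + p.2 ≤ 1} := rfl
  have hmeas : MeasurableSet {p : ℝ × ℝ | 0 ≤ p.1 ∧ 0 ≤ p.2 ∧ p.1 + p.2 ≤ 1} := by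
    measurability
  rw [hT, (volume_preserving_piFinTwo (fun _ => ℝ)).measure_preimage hmeas.nullMeasurableSet,
    Measure.volume_eq_prod, Measure.prod_apply hmeas]
  simp only [preimage_ofPred_eq, volume_unitTriangle_slice]
  rw [lintegral_indicator measurableSet_Icc, ← ofReal_integral_eq_lintegral_ofReal]
  · rw [integral_Icc_eq_integral_Ioc, ← intervalIntegral.integral_of_le zero_le_one]
    rw [intervalIntegral.integral_sub intervalIntegrable_const
      intervalIntegral.intervalIntegrable_id, integral_id]
    norm_num
  · exact (continuous_const.sub continuous_id).integrableOn_Icc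
  · exact (ae_restrict_iff' measurableSet_Icc).mpr (Filter.Eventually.of_forall fun x hx => by
      simp only [Pi.zero_apply, sub_nonneg]; exact hx.2)

lemma convex_unitTriangle : Convex ℝ unitTriangle := by
  rintro x ⟨hx0, hx1, hx⟩ y ⟨hy0, hy1, hy⟩ a b ha hb hab
  simp only [unitTriangle, mem_ofPred_eq, Pi.add_apply, Pi.smul_apply, smul_eq_mul]
  refine ⟨by positivity, by positivity, ?_⟩
  nlinarith

lemma convexHull_zero_single_single :
    convexHull ℝ {0, Pi.single 0 1, Pi.single 1 1} = unitTriangle := by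
  refine (convexHull_min ?_ convex_unitTriangle).antisymm fun x ⟨hx0, hx1, hx⟩ => ?_
  · rintro x (rfl | rfl | rfl) <;> simp [unitTriangle]
  · have := add_smul_add_smul_mem_convexHull (0 : Fin 2 → ℝ) (Pi.single 0 1) (Pi.single 1 1)
      hx0 hx1 hx
    simp only [zero_add] at this
    convert this
    funext i
    fin_cases i <;> simp

open scoped Pointwise in
lemma volume_convexHull_triangle (A U V : Fin 2 → ℝ) :
    volume (convexHull ℝ {A, A + U, A + V}) = ENNReal.ofReal (|det2 U V| / 2) := by
  set L := Matrix.toLin' !![U 0, V 0; U 1, V 1]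
  have hL0 : L (Pi.single 0 1) = U := by
    funext i; fin_cases i <;> simp [L]
  have hL1 : L (Pi.single 1 1) = V := by
    funext i; fin_cases i <;> simp [L]
  have hvert : ({A, A + U, A + V} : Set (Fin 2 → ℝ)) =
      A +ᵥ L '' {0, Pi.single 0 1, Pi.single 1 1} := by
    simp [image_insert_eq, hL0, hL1, vadd_set_insert]
  rw [hvert, convexHull_vadd, ← LinearMap.image_convexHull, convexHull_zero_single_single,
    measure_vadd, Measure.addHaar_image_linearMap, volume_unitTriangle, LinearMap.det_toLin',
    Matrix.det_fin_two_of]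
  rw [← ENNReal.ofReal_mul (abs_nonneg _), det2, mul_comm (V 0), mul_one_div]

lemma volume_convexHull_c2_of_natAbs_det2_sub_eq_one {a b c : Fin 2 → ℤ}
    (h : (det2 (b - a) (c - a)).natAbs = 1) :
    volume (convexHull ℝ {c2 a, c2 b, c2 c}) = ENNReal.ofReal (1 / 2) := by
  have hvol := volume_convexHull_triangle (c2 a) (c2 (b - a)) (c2 (c - a))
  simp only [c2_sub, add_sub_cancel] at hvol
  rw [hvol, ← c2_sub, ← c2_sub, det2_c2, ← Int.cast_abs, Int.abs_eq_natAbs, h]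
  norm_num

lemma AffineIndependent.mem_of_mem_convexHull {R E : Type*} [Field R] [LinearOrder R]
    [IsStrictOrderedRing R] [AddCommGroup E] [Module R E] {S F : Finset E}
    (hS : AffineIndependent R ((↑) : S → E)) {x : E} (hx : x ∈ S) (hF : F ⊆ S)
    (hxF : x ∈ convexHull R (F : Set E)) : x ∈ F := by
  classical
  have hinter := hS.convexHull_inter (t₁ := {x}) (Finset.singleton_subset_iff.mpr hx) hF
  have hne : (convexHull R (({x} ∩ F : Finset E) : Set E)).Nonempty := by
    rw [Finset.coe_inter, hinter]
    exact ⟨x, by simp, hxF⟩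
  obtain ⟨y, hy⟩ := convexHull_nonempty_iff.mp hne
  obtain ⟨hyx, hyF⟩ := Finset.mem_inter.mp hy
  rwa [Finset.mem_singleton.mp hyx] at hyF

lemma AffineIndependent.not_collinear_of_card_eq_three {k V P : Type*} [DivisionRing k]
    [AddCommGroup V] [Module k V] [AddTorsor V P] {S : Finset P}
    (hS : AffineIndependent k ((↑) : S → P)) (hcard : S.card = 3) : ¬Collinear k (S : Set P) := by
  rw [affineIndependent_iff_not_finrank_vectorSpan_le k _ (n := 1) (by simpa using hcard)] at hS
  have := finiteDimensional_vectorSpan_of_finite k S.finite_toSet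
  rw [Subtype.range_val_subtype] at hS
  rw [collinear_iff_finrank_le_one]
  exact hS

section Triangulation

variable {P : Set (Fin 2 → ℝ)} {T : Set (Finset (Fin 2 → ℝ))}

lemma convexHull_inter_latticePts2_subset_of_isFine2 (hT : IsTriangulationOf2 P T)
    (hfine : IsFine2 P T) {S : Finset (Fin 2 → ℝ)} (hS : S ∈ T) :
    convexHull ℝ (S : Set (Fin 2 → ℝ)) ∩ latticePts2 ⊆ S := by
  obtain ⟨-, hvert, hunion, -, hinter⟩ := hT
  rintro p ⟨hpS, hlat⟩
  have hpP : p ∈ P := hunion ▸ mem_biUnion hS hpS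
  obtain ⟨S', hS', hpS'⟩ := hfine p ⟨hpP, hlat⟩
  obtain ⟨F, -, hFS, hFS', hSS'⟩ := hinter S hS S' hS'
  have hpF : p ∈ convexHull ℝ (F : Set (Fin 2 → ℝ)) :=
    hSS' ▸ ⟨hpS, subset_convexHull ℝ _ hpS'⟩
  exact hFS ((hvert S' hS').2.mem_of_mem_convexHull hpS' hFS' hpF)

theorem isUnimodular2_of_isFine2 (hT : IsTriangulationOf2 P T) (hfine : IsFine2 P T) :
    IsUnimodular2 T := by
  intro S hS hcard
  have hcol := (hT.2.1 S hS).2.not_collinear_of_card_eq_three hcard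
  have hempty := convexHull_inter_latticePts2_subset_of_isFine2 hT hfine hS
  have hlat : ∀ x ∈ S, x ∈ range c2 := fun x hx =>
    latticePts2_eq_range_c2 ▸ ((hT.2.1 S hS).1 hx).2
  obtain ⟨x, y, z, -, -, -, rfl⟩ := Finset.card_eq_three.mp hcard
  obtain ⟨a, rfl⟩ := hlat x (by simp)
  obtain ⟨b, rfl⟩ := hlat y (by simp)
  obtain ⟨c, rfl⟩ := hlat z (by simp)
  simp only [Finset.coe_insert, Finset.coe_singleton] at hcol hempty ⊢
  exact volume_convexHull_c2_of_natAbs_det2_sub_eq_one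
    (natAbs_det2_sub_eq_one_of_empty_triangle hcol hempty)

end Triangulation

theorem stmt6 :
    (∀ a b c : Fin 2 → ℤ, ¬ Collinear ℝ {c2 a, c2 b, c2 c} →
      convexHull ℝ {c2 a, c2 b, c2 c} ∩ latticePts2 ⊆ {c2 a, c2 b, c2 c} →
      ((b 0 - a 0) * (c 1 - a 1) - (b 1 - a 1) * (c 0 - a 0)).natAbs = 1 ∧
        volume (convexHull ℝ {c2 a, c2 b, c2 c}) = ENNReal.ofReal (1 / 2)) ∧
    (∀ (P : Set (Fin 2 → ℝ)) (T : Set (Finset (Fin 2 → ℝ))),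
      IsLatticePolygon P → IsTriangulationOf2 P T → IsFine2 P T → IsUnimodular2 T) := by
  refine ⟨fun a b c hcol hempty => ?_, fun P T _ hT hfine => isUnimodular2_of_isFine2 hT hfine⟩
  have hdet : (det2 (b - a) (c - a)).natAbs = 1 :=
    natAbs_det2_sub_eq_one_of_empty_triangle hcol hempty
  exact ⟨hdet, volume_convexHull_c2_of_natAbs_det2_sub_eq_one hdet⟩
end
end

section
/- (Correctness of the vertex-removal algorithm.) Let P ⊆ Q be 3-dimensional canonical subpolytopes of 4Δ₃ with P ≠ Q. Then Q has a vertex v with v ∉ P such that the polytope Q_v := conv((Q ∩ ℤ³) \ {v}) satisfies P ⊆ Q_v and (1,1,1) ∈ int(Q_v); in particular Q_v is again a canonical subpolytope of 4Δ₃. Consequently, every 3-dimensional canonical subpolytope of 4Δ₃ is obtained from 4Δ₃ by a finite sequence of such vertex removals, each of which preserves the property that (1,1,1) is an interior point. -/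
open Set MeasureTheory

noncomputable section

/-- Points of `ℝ³` with integer coordinates. -/
def latticePts : Set (Fin 3 → ℝ) := {x | ∀ i, ∃ n : ℤ, x i = (n : ℝ)}

/-- The point `(1,1,1)`. -/
def pOne : Fin 3 → ℝ := ![1, 1, 1]

/-- The tetrahedron `4Δ₃ = conv{(0,0,0),(4,0,0),(0,4,0),(0,0,4)}`. -/
def Delta4 : Set (Fin 3 → ℝ) :=
  convexHull ℝ {![0, 0, 0], ![4, 0, 0], ![0, 4, 0], ![0, 0, 4]}

/-- A subpolytope of `4Δ₃`: a lattice polytope `P ⊆ 4Δ₃` with `P = conv(P ∩ ℤ³)`. -/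
def IsSubpolytope (P : Set (Fin 3 → ℝ)) : Prop :=
  P ⊆ Delta4 ∧ P = convexHull ℝ (P ∩ latticePts)

/-- A canonical subpolytope of `4Δ₃`: a subpolytope with `(1,1,1)` in its interior
(this forces it to be `3`-dimensional). -/
def IsCanonicalSub (P : Set (Fin 3 → ℝ)) : Prop :=
  IsSubpolytope P ∧ pOne ∈ interior P

/-- The standard inner product on `ℝⁿ`. -/
def dotp {n : ℕ} (a x : Fin n → ℝ) : ℝ := ∑ i, a i * x i

/-- Equivalence of subsets of `ℝ³` under the group of affine symmetries of `4Δ₃`. -/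
def SymEquiv (P Q : Set (Fin 3 → ℝ)) : Prop :=
  ∃ g : (Fin 3 → ℝ) ≃ᵃ[ℝ] (Fin 3 → ℝ), g '' Delta4 = Delta4 ∧ g '' P = Q

/-- One step of the vertex-removal algorithm: remove a vertex `v` of `Q` and take the
convex hull of the remaining lattice points, provided `(1,1,1)` stays interior. -/
def RemoveStep (Q Q' : Set (Fin 3 → ℝ)) : Prop :=
  ∃ v ∈ Set.extremePoints ℝ Q,
    Q' = convexHull ℝ ((Q ∩ latticePts) \ {v}) ∧ pOne ∈ interior Q'

/-!
Since `Q` is compact and convex with `P ⊊ Q`, Krein–Milman gives a vertex `v` of `Q` outside the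
closed convex set `P`. Every lattice point of `P` is then a lattice point of `Q` other than `v`, so
`P = conv(P ∩ ℤ³) ⊆ Q_v`, and `(1,1,1)` stays interior. As `v` is an extreme point of `Q`, it does
not lie in `Q_v`, so `Q_v` has fewer lattice points than `Q`; starting from `Q = 4Δ₃` the removals
therefore reach `P` after finitely many steps.
-/

theorem IsCompact.exists_mem_extremePoints_notMem {E : Type*} [AddCommGroup E] [Module ℝ E]
    [TopologicalSpace E] [T2Space E] [IsTopologicalAddGroup E] [ContinuousSMul ℝ E]
    [LocallyConvexSpace ℝ E] {K C : Set E} (hK : IsCompact K) (hKc : Convex ℝ K)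
    (hC : IsClosed C) (hCc : Convex ℝ C) (hKC : ¬K ⊆ C) : ∃ v ∈ K.extremePoints ℝ, v ∉ C := by
  by_contra! h
  refine hKC ?_
  rw [← closure_convexHull_extremePoints hK hKc]
  exact closure_minimal (convexHull_min h hCc) hC

theorem Convex.convexHull_diff_singleton_subset {𝕜 E : Type*} [Ring 𝕜] [LinearOrder 𝕜]
    [IsStrictOrderedRing 𝕜] [DenselyOrdered 𝕜] [AddCommGroup E] [Module 𝕜 E]
    [Module.IsTorsionFree 𝕜 E]
    {A s : Set E} {v : E} (hA : Convex 𝕜 A) (hv : v ∈ A.extremePoints 𝕜) (hs : s ⊆ A) :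
    convexHull 𝕜 (s \ {v}) ⊆ A \ {v} :=
  convexHull_min (sdiff_subset_sdiff_left hs) (hA.mem_extremePoints_iff_convex_sdiff.1 hv).2

theorem mem_Delta4_of_nonneg {x : Fin 3 → ℝ} (h0 : 0 ≤ x 0) (h1 : 0 ≤ x 1) (h2 : 0 ≤ x 2)
    (hsum : x 0 + x 1 + x 2 ≤ 4) : x ∈ Delta4 := by
  let w : Fin 4 → ℝ := ![1 - (x 0 + x 1 + x 2) / 4, x 0 / 4, x 1 / 4, x 2 / 4]
  let z : Fin 4 → Fin 3 → ℝ := ![![0, 0, 0], ![4, 0, 0], ![0, 4, 0], ![0, 0, 4]]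
  have hx : ∑ i, w i • z i = x := by
    funext j
    fin_cases j <;> simp [w, z, Fin.sum_univ_four]
  rw [← hx]
  refine (convex_convexHull ℝ _).sum_mem (fun i _ => ?_) ?_ (fun i _ => ?_)
  · fin_cases i <;> simp [w] <;> linarith
  · simp [w, Fin.sum_univ_four]; ring
  · apply subset_convexHull
    fin_cases i <;> simp [z]

theorem Delta4_subset_pi_Icc : Delta4 ⊆ univ.pi fun _ => Icc (0 : ℝ) 4 := by
  refine convexHull_min ?_ (convex_pi fun _ _ => convex_Icc 0 4)
  simp only [insert_subset_iff, singleton_subset_iff, mem_univ_pi]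
  refine ⟨?_, ?_, ?_, ?_⟩ <;> intro i <;> fin_cases i <;> norm_num

theorem pOne_mem_interior_Delta4 : pOne ∈ interior Delta4 := by
  let U : Set (Fin 3 → ℝ) :=
    {x | 0 < x 0} ∩ {x | 0 < x 1} ∩ {x | 0 < x 2} ∩ {x | x 0 + x 1 + x 2 < 4}
  have hU : IsOpen U := by
    refine (((isOpen_lt ?_ ?_).inter (isOpen_lt ?_ ?_)).inter (isOpen_lt ?_ ?_)).inter
      (isOpen_lt ?_ ?_) <;> fun_prop
  refine interior_maximal ?_ hU ?_
  · rintro x ⟨⟨⟨h0, h1⟩, h2⟩, h3⟩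
    exact mem_Delta4_of_nonneg h0.le h1.le h2.le h3.le
  · simp [U, pOne]
    norm_num

theorem vertices_Delta4_subset_latticePts :
    ({![0, 0, 0], ![4, 0, 0], ![0, 4, 0], ![0, 0, 4]} : Set (Fin 3 → ℝ)) ⊆ latticePts := by
  simp only [insert_subset_iff, singleton_subset_iff]
  refine ⟨?_, ?_, ?_, ?_⟩ <;> intro i <;> fin_cases i <;>
    first | exact ⟨0, Int.cast_zero.symm⟩ | exact ⟨4, (Int.cast_ofNat 4).symm⟩

theorem convex_Delta4 : Convex ℝ Delta4 :=
  convex_convexHull ℝ _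

theorem isSubpolytope_convexHull {s : Set (Fin 3 → ℝ)} (hs : s ⊆ latticePts) (hsΔ : s ⊆ Delta4) :
    IsSubpolytope (convexHull ℝ s) :=
  ⟨convexHull_min hsΔ convex_Delta4,
    (convexHull_mono (subset_inter (subset_convexHull ℝ s) hs)).antisymm
      (convexHull_min inter_subset_left (convex_convexHull ℝ s))⟩

theorem isCanonicalSub_Delta4 : IsCanonicalSub Delta4 :=
  ⟨isSubpolytope_convexHull vertices_Delta4_subset_latticePts (subset_convexHull ℝ _),
    pOne_mem_interior_Delta4⟩

/-- The polytope `Q_v`. -/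
def vertexRemoval (Q : Set (Fin 3 → ℝ)) (v : Fin 3 → ℝ) : Set (Fin 3 → ℝ) :=
  convexHull ℝ ((Q ∩ latticePts) \ {v})

namespace IsSubpolytope

variable {P Q : Set (Fin 3 → ℝ)} {v : Fin 3 → ℝ}

theorem convex (hP : IsSubpolytope P) : Convex ℝ P := by
  rw [hP.2]
  exact convex_convexHull ℝ _

theorem finite_inter_latticePts (hP : IsSubpolytope P) : (P ∩ latticePts).Finite := by
  refine ((Finite.pi fun _ : Fin 3 => finite_Icc (0 : ℤ) 4).image fun z i => (z i : ℝ)).subset ?_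
  rintro x ⟨hxP, hx⟩
  choose n hn using hx
  refine ⟨n, fun i _ => ?_, funext fun i => (hn i).symm⟩
  have hbox := Delta4_subset_pi_Icc (hP.1 hxP) i (mem_univ i)
  rw [hn i] at hbox
  exact ⟨by exact_mod_cast hbox.1, by exact_mod_cast hbox.2⟩

theorem isCompact (hP : IsSubpolytope P) : IsCompact P := by
  rw [hP.2]
  exact hP.finite_inter_latticePts.isCompact_convexHull ℝ

theorem extremePoints_subset (hP : IsSubpolytope P) : P.extremePoints ℝ ⊆ P ∩ latticePts := by
  intro v hv
  rw [hP.2] at hv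
  exact extremePoints_convexHull_subset hv

theorem subset_vertexRemoval (hP : IsSubpolytope P) (hPQ : P ⊆ Q) (hvP : v ∉ P) :
    P ⊆ vertexRemoval Q v := by
  rw [hP.2]
  exact convexHull_mono fun x hx => ⟨⟨hPQ hx.1, hx.2⟩, fun hxv => hvP (hxv ▸ hx.1)⟩

theorem ncard_vertexRemoval_lt (hQ : IsSubpolytope Q) (hv : v ∈ Q.extremePoints ℝ) :
    (vertexRemoval Q v ∩ latticePts).ncard < (Q ∩ latticePts).ncard := by
  have hsub : vertexRemoval Q v ⊆ Q \ {v} :=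
    Convex.convexHull_diff_singleton_subset hQ.convex hv inter_subset_left
  refine ncard_lt_ncard ⟨inter_subset_inter_left _ (hsub.trans sdiff_subset), fun h => ?_⟩
    hQ.finite_inter_latticePts
  exact (hsub (h (hQ.extremePoints_subset hv)).1).2 rfl

end IsSubpolytope

theorem IsSubpolytope.vertexRemoval {Q : Set (Fin 3 → ℝ)} (hQ : IsSubpolytope Q)
    (v : Fin 3 → ℝ) : IsSubpolytope (vertexRemoval Q v) :=
  isSubpolytope_convexHull (fun _ hx => hx.1.2) (fun _ hx => hQ.1 hx.1.1)

namespace IsCanonicalSub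

variable {P Q : Set (Fin 3 → ℝ)}

theorem exists_vertexRemoval (hP : IsCanonicalSub P) (hQ : IsCanonicalSub Q) (hPQ : P ⊆ Q)
    (hne : P ≠ Q) :
    ∃ v ∈ Q.extremePoints ℝ, v ∉ P ∧ P ⊆ vertexRemoval Q v ∧
      pOne ∈ interior (vertexRemoval Q v) ∧ IsCanonicalSub (vertexRemoval Q v) := by
  obtain ⟨v, hv, hvP⟩ := hQ.1.isCompact.exists_mem_extremePoints_notMem hQ.1.convex
    hP.1.isCompact.isClosed hP.1.convex fun hQP => hne (hPQ.antisymm hQP)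
  have hPv := hP.1.subset_vertexRemoval hPQ hvP
  have hint := interior_mono hPv hP.2
  exact ⟨v, hv, hvP, hPv, hint, hQ.1.vertexRemoval v, hint⟩

theorem reflTransGen_removeStep (hP : IsCanonicalSub P) (hQ : IsCanonicalSub Q) (hPQ : P ⊆ Q) :
    Relation.ReflTransGen RemoveStep Q P := by
  induction hn : (Q ∩ latticePts).ncard using Nat.strong_induction_on generalizing Q with
  | _ n ih =>
  obtain rfl | hne := eq_or_ne P Q
  · rfl
  obtain ⟨v, hv, -, hPv, hint, hQv⟩ := hP.exists_vertexRemoval hQ hPQ hne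
  exact .head ⟨v, hv, rfl, hint⟩ (ih _ (hn ▸ hQ.1.ncard_vertexRemoval_lt hv) hQv hPv rfl)

end IsCanonicalSub

theorem stmt15 :
    (∀ P Q : Set (Fin 3 → ℝ), IsCanonicalSub P → IsCanonicalSub Q → P ⊆ Q → P ≠ Q →
      ∃ v ∈ Set.extremePoints ℝ Q, v ∉ P ∧
        P ⊆ convexHull ℝ ((Q ∩ latticePts) \ {v}) ∧
        pOne ∈ interior (convexHull ℝ ((Q ∩ latticePts) \ {v})) ∧
        IsCanonicalSub (convexHull ℝ ((Q ∩ latticePts) \ {v}))) ∧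
    (∀ P : Set (Fin 3 → ℝ), IsCanonicalSub P →
      Relation.ReflTransGen RemoveStep Delta4 P) :=
  ⟨fun _ _ hP hQ hPQ hne => hP.exists_vertexRemoval hQ hPQ hne,
    fun _ hP => hP.reflTransGen_removeStep isCanonicalSub_Delta4 hP.1.1⟩
end
end
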